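/- arXiv:math/0311163 — 10 statements merged into one kernel-verified Lean document; each statement's English description precedes it below -/
import Mathlib

section
/- Let Δ ⊆ ℝⁿ be an open set containing 0 and let g : ℝⁿ → ℝⁿ be analytic on Δ, map Δ into itself, satisfy g(0) = 0 and ‖fderiv ℝ g 0‖ < 1. Then the domain of attraction DA(0) = {y ∈ Δ : g^[k](y) → 0 as k → ∞} is an open subset of ℝⁿ. -/
open Filter Topology

theorem domain_of_attraction_isOpen
    {n : ℕ} (Δ : Set (EuclideanSpace ℝ (Fin n)))
    (g : EuclideanSpace ℝ (Fin n) → EuclideanSpace ℝ (Fin n))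
    (hΔ : IsOpen Δ) (h0 : (0 : EuclideanSpace ℝ (Fin n)) ∈ Δ)
    (hg : AnalyticOn ℝ g Δ) (hmaps : Set.MapsTo g Δ Δ)
    (hfix : g 0 = 0) (hd : ‖fderiv ℝ g 0‖ < 1) :
    IsOpen {y ∈ Δ | Tendsto (fun k => g^[k] y) atTop (𝓝 0)} := by
  set A := fderiv ℝ g 0 with hA
  set c : ℝ := (1 + ‖A‖) / 2 with hc
  have hc0 : 0 ≤ c := by positivity
  have hc1 : c < 1 := by rw [hc]; linarith
  have hAc : ‖A‖ < c := by rw [hc]; linarith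
  have hcont : ContinuousOn g Δ := hg.continuousOn
  have hdiff : HasFDerivAt g A 0 :=
    ((hg.differentiableOn 0 h0).differentiableAt (hΔ.mem_nhds h0)).hasFDerivAt
  -- little-o estimate: ‖g x‖ ≤ c * ‖x‖ near 0
  have hlo := hdiff.isLittleO
  have hev : ∀ᶠ x in 𝓝 (0 : EuclideanSpace ℝ (Fin n)), ‖g x‖ ≤ c * ‖x‖ := by
    have h1 := hlo.bound (by linarith : (0:ℝ) < c - ‖A‖)
    filter_upwards [h1] with x hx
    have hx' : ‖g x - A x‖ ≤ (c - ‖A‖) * ‖x‖ := by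
      rw [hfix] at hx; simp only [sub_zero] at hx; exact hx
    have hAx : ‖A x‖ ≤ ‖A‖ * ‖x‖ := A.le_opNorm x
    calc ‖g x‖ = ‖g x - A x + A x‖ := by rw [sub_add_cancel]
      _ ≤ ‖g x - A x‖ + ‖A x‖ := norm_add_le _ _
      _ ≤ (c - ‖A‖) * ‖x‖ + ‖A‖ * ‖x‖ := add_le_add hx' hAx
      _ = c * ‖x‖ := by ring
  obtain ⟨ε, hε0, hεsub⟩ := Metric.mem_nhds_iff.mp
    (Filter.inter_mem hev (hΔ.mem_nhds h0))
  set B := Metric.ball (0 : EuclideanSpace ℝ (Fin n)) ε with hB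
  have hBΔ : B ⊆ Δ := fun x hx => (hεsub hx).2
  have hBg : ∀ x ∈ B, ‖g x‖ ≤ c * ‖x‖ := fun x hx => (hεsub hx).1
  -- iterates starting in B
  have hiter : ∀ x ∈ B, ∀ k, g^[k] x ∈ B ∧ ‖g^[k] x‖ ≤ c ^ k * ‖x‖ := by
    intro x hx k
    induction k with
    | zero => simpa using hx
    | succ k ih =>
      obtain ⟨hmem, hbd⟩ := ih
      have hg1 : ‖g (g^[k] x)‖ ≤ c * ‖g^[k] x‖ := hBg _ hmem
      have hbd' : ‖g^[k+1] x‖ ≤ c ^ (k+1) * ‖x‖ := by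
        rw [Function.iterate_succ_apply']
        calc ‖g (g^[k] x)‖ ≤ c * ‖g^[k] x‖ := hg1
          _ ≤ c * (c ^ k * ‖x‖) := by
              exact mul_le_mul_of_nonneg_left hbd hc0
          _ = c ^ (k+1) * ‖x‖ := by ring
      refine ⟨?_, hbd'⟩
      have hxB : ‖x‖ < ε := by simpa [hB, Metric.mem_ball, dist_zero_right] using hx
      have : c ^ (k+1) * ‖x‖ < ε := by
        have hck : c ^ (k+1) ≤ 1 := pow_le_one₀ hc0 hc1.le
        nlinarith [norm_nonneg x, norm_nonneg (g^[k+1] x)]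
      simp only [hB, Metric.mem_ball, dist_zero_right]
      linarith
  have hBtend : ∀ x ∈ B, Tendsto (fun k => g^[k] x) atTop (𝓝 0) := by
    intro x hx
    have hsq : Tendsto (fun k : ℕ => c ^ k * ‖x‖) atTop (𝓝 0) := by
      have := (tendsto_pow_atTop_nhds_zero_of_lt_one hc0 hc1).mul_const ‖x‖
      simpa using this
    rw [tendsto_zero_iff_norm_tendsto_zero]
    exact squeeze_zero (fun k => norm_nonneg _) (fun k => (hiter x hx k).2) hsq
  -- the increasing family of open sets
  let S : ℕ → Set (EuclideanSpace ℝ (Fin n)) := fun N =>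
    Nat.rec B (fun _ s => Δ ∩ g ⁻¹' s) N
  have hS0 : S 0 = B := rfl
  have hSsucc : ∀ N, S (N+1) = Δ ∩ g ⁻¹' (S N) := fun N => rfl
  have hSopen : ∀ N, IsOpen (S N) := by
    intro N
    induction N with
    | zero => exact Metric.isOpen_ball
    | succ N ih => exact hcont.isOpen_inter_preimage hΔ ih
  have hSsub : ∀ N, S N ⊆ {y ∈ Δ | Tendsto (fun k => g^[k] y) atTop (𝓝 0)} := by
    intro N
    induction N with
    | zero => exact fun y hy => ⟨hBΔ hy, hBtend y hy⟩
    | succ N ih =>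
      rintro y ⟨hyΔ, hygy⟩
      obtain ⟨-, htend⟩ := ih hygy
      refine ⟨hyΔ, ?_⟩
      have : Tendsto (fun k => g^[k+1] y) atTop (𝓝 0) := by
        simpa [Function.iterate_succ_apply] using htend
      exact (tendsto_add_atTop_iff_nat 1).mp this
  have hSsup : {y ∈ Δ | Tendsto (fun k => g^[k] y) atTop (𝓝 0)} ⊆ ⋃ N, S N := by
    rintro y ⟨hyΔ, htend⟩
    have hchain : ∀ k, g^[k] y ∈ Δ := by
      intro k
      induction k with
      | zero => exact hyΔ
      | succ k ih => rw [Function.iterate_succ_apply']; exact hmaps ih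
    have hevB : ∀ᶠ k in atTop, g^[k] y ∈ B :=
      htend (Metric.ball_mem_nhds 0 hε0)
    obtain ⟨N, hN⟩ := hevB.exists
    have key : ∀ N, ∀ z, (∀ k, g^[k] z ∈ Δ) → g^[N] z ∈ B → z ∈ S N := by
      intro N
      induction N with
      | zero => exact fun z _ hz => hz
      | succ N ih =>
        intro z hzΔ hzB
        rw [hSsucc]
        refine ⟨hzΔ 0, ih (g z) (fun k => by
          simpa [Function.iterate_succ_apply] using hzΔ (k+1)) ?_⟩
        simpa [Function.iterate_succ_apply] using hzB
    exact Set.mem_iUnion.mpr ⟨N, key N y hchain hN⟩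
  have heq : {y ∈ Δ | Tendsto (fun k => g^[k] y) atTop (𝓝 0)} = ⋃ N, S N :=
    Set.Subset.antisymm hSsup (Set.iUnion_subset hSsub)
  rw [heq]
  exact isOpen_iUnion hSopen
end

section
/- Let Δ ⊆ ℝⁿ be an open set containing 0 and let g : ℝⁿ → ℝⁿ be analytic on Δ, map Δ into itself, satisfy g(0) = 0 and ‖fderiv ℝ g 0‖ < 1. Then for every y in the domain of attraction DA(0) = {y ∈ Δ : g^[k](y) → 0}, the series ∑_{k=0}^∞ ‖g^[k](y)‖² converges (is summable). -/
open Filter Topology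

set_option maxHeartbeats 1000000

theorem summable_of_mem_domain_of_attraction
    {n : ℕ} (Δ : Set (EuclideanSpace ℝ (Fin n)))
    (g : EuclideanSpace ℝ (Fin n) → EuclideanSpace ℝ (Fin n))
    (hΔ : IsOpen Δ) (h0 : (0 : EuclideanSpace ℝ (Fin n)) ∈ Δ)
    (hg : AnalyticOn ℝ g Δ) (hmaps : Set.MapsTo g Δ Δ)
    (hfix : g 0 = 0) (hd : ‖fderiv ℝ g 0‖ < 1) :
    ∀ y ∈ {y ∈ Δ | Tendsto (fun k => g^[k] y) atTop (𝓝 0)},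
      Summable (fun k : ℕ => ‖g^[k] y‖ ^ 2) := by
  intro y hy
  obtain ⟨hyΔ, hyt⟩ := hy
  set A := fderiv ℝ g 0 with hA
  set c : ℝ := (1 + ‖A‖) / 2 with hc
  have hc1 : c < 1 := by
    simp only [hc]; linarith
  have hc0 : 0 ≤ c := by
    have := norm_nonneg A
    simp only [hc]; linarith
  have hε : (0:ℝ) < (1 - ‖A‖) / 2 := by linarith
  -- differentiability at 0
  have hdiff : DifferentiableAt ℝ g 0 :=
    ((hg 0 h0).differentiableWithinAt).differentiableAt (Filter.mem_of_superset (hΔ.mem_nhds h0) (Set.subset_insert _ _))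
  have hlo := hdiff.hasFDerivAt.isLittleO
  rw [Asymptotics.isLittleO_iff] at hlo
  have hev : ∀ᶠ x in 𝓝 (0 : EuclideanSpace ℝ (Fin n)), ‖g x‖ ≤ c * ‖x‖ := by
    filter_upwards [hlo hε] with x hx
    simp only [hfix, sub_zero] at hx
    have h1 : ‖g x‖ ≤ ‖g x - A x‖ + ‖A x‖ := by
      have := norm_add_le (g x - A x) (A x); simpa using this
    have h2 : ‖A x‖ ≤ ‖A‖ * ‖x‖ := A.le_opNorm x
    have : ‖g x‖ ≤ (1 - ‖A‖) / 2 * ‖x‖ + ‖A‖ * ‖x‖ := by linarith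
    calc ‖g x‖ ≤ (1 - ‖A‖) / 2 * ‖x‖ + ‖A‖ * ‖x‖ := this
      _ = c * ‖x‖ := by ring
  obtain ⟨r, hr, hball⟩ := Metric.eventually_nhds_iff.mp hev
  -- eventually the iterates are within r of 0
  have htend : ∀ᶠ k in atTop, dist (g^[k] y) 0 < r :=
    hyt (Metric.ball_mem_nhds 0 hr)
  obtain ⟨N, hN⟩ := eventually_atTop.mp htend
  have key : ∀ m : ℕ, ‖g^[N + m] y‖ ≤ c ^ m * ‖g^[N] y‖ := by
    intro m
    induction m with
    | zero => simp
    | succ m ih =>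
      have hmem : dist (g^[N + m] y) 0 < r := hN _ (Nat.le_add_right N m)
      have hstep : ‖g (g^[N + m] y)‖ ≤ c * ‖g^[N + m] y‖ := hball hmem
      have : g^[N + (m + 1)] y = g (g^[N + m] y) := by
        rw [← add_assoc, Function.iterate_succ_apply']
      rw [this]
      calc ‖g (g^[N + m] y)‖ ≤ c * ‖g^[N + m] y‖ := hstep
        _ ≤ c * (c ^ m * ‖g^[N] y‖) := by
            exact mul_le_mul_of_nonneg_left ih hc0
        _ = c ^ (m + 1) * ‖g^[N] y‖ := by ring
  rw [← summable_nat_add_iff N]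
  have hsum : Summable fun m : ℕ => (c ^ 2) ^ m * ‖g^[N] y‖ ^ 2 := by
    apply Summable.mul_right
    apply summable_geometric_of_lt_one (by positivity)
    calc c ^ 2 ≤ c * 1 := by nlinarith
      _ < 1 := by linarith
  refine Summable.of_nonneg_of_le (fun m => by positivity) (fun m => ?_) hsum
  have h1 : ‖g^[m + N] y‖ ≤ c ^ m * ‖g^[N] y‖ := by
    have := key m; rwa [add_comm] at this
  have h2 : ‖g^[m + N] y‖ ^ 2 ≤ (c ^ m * ‖g^[N] y‖) ^ 2 :=
    pow_le_pow_left₀ (norm_nonneg _) h1 2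
  calc ‖g^[m + N] y‖ ^ 2 ≤ (c ^ m * ‖g^[N] y‖) ^ 2 := h2
    _ = (c ^ 2) ^ m * ‖g^[N] y‖ ^ 2 := by rw [mul_pow, ← pow_mul, mul_comm m 2, pow_mul]
end

section
/- Let Δ ⊆ ℝⁿ be an open set containing 0 and let g : ℝⁿ → ℝⁿ be analytic on Δ, map Δ into itself, satisfy g(0) = 0 and ‖fderiv ℝ g 0‖ < 1. Define V(y) = ∑_{k=0}^∞ ‖g^[k](y)‖² for y in the domain of attraction DA(0). Then V satisfies the iterative functional equation V(g(y)) − V(y) = −‖y‖² for all y ∈ DA(0), V(0) = 0, and V(y) > 0 for every y ∈ DA(0) with y ≠ 0. -/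
open Filter Topology

set_option synthInstance.maxHeartbeats 1000000

theorem lyapunov_functional_equation
    {n : ℕ} (Δ : Set (EuclideanSpace ℝ (Fin n)))
    (g : EuclideanSpace ℝ (Fin n) → EuclideanSpace ℝ (Fin n))
    (hΔ : IsOpen Δ) (h0 : (0 : EuclideanSpace ℝ (Fin n)) ∈ Δ)
    (hg : AnalyticOn ℝ g Δ) (hmaps : Set.MapsTo g Δ Δ)
    (hfix : g 0 = 0) (hd : ‖fderiv ℝ g 0‖ < 1)
    (V : EuclideanSpace ℝ (Fin n) → ℝ)
    (hV : V = fun y => ∑' k : ℕ, ‖g^[k] y‖ ^ 2) :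
    (∀ y ∈ {y ∈ Δ | Tendsto (fun k => g^[k] y) atTop (𝓝 0)},
        V (g y) - V y = -‖y‖ ^ 2) ∧
    V 0 = 0 ∧
    (∀ y ∈ {y ∈ Δ | Tendsto (fun k => g^[k] y) atTop (𝓝 0)},
        y ≠ 0 → 0 < V y) := by
  -- differentiability at 0
  have hdiff : DifferentiableAt ℝ g 0 :=
    ((hΔ.analyticOn_iff_analyticOnNhd.mp hg) 0 h0).differentiableAt
  set A := fderiv ℝ g 0 with hA
  have hder : HasFDerivAt g A 0 := hdiff.hasFDerivAt
  set c : ℝ := (1 + ‖A‖) / 2 with hc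
  have hc1 : c < 1 := by rw [hc]; linarith
  have hAc : ‖A‖ < c := by rw [hc]; linarith
  have hc0 : 0 < c := by
    have h := norm_nonneg A
    rw [hc]; linarith
  -- contraction near 0
  have hlo := hder.isLittleO
  have hε : (0 : ℝ) < c - ‖A‖ := by linarith
  have hev : ∀ᶠ y in 𝓝 (0 : EuclideanSpace ℝ (Fin n)), ‖g y - A y‖ ≤ (c - ‖A‖) * ‖y‖ := by
    filter_upwards [hlo.def hε] with x hx
    simp only [hfix, sub_zero] at hx
    exact hx
  obtain ⟨r, rpos, hball⟩ := Metric.eventually_nhds_iff_ball.mp hev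
  have hcontr : ∀ y : EuclideanSpace ℝ (Fin n), ‖y‖ < r → ‖g y‖ ≤ c * ‖y‖ := by
    intro y hy
    have h1 : ‖g y - A y‖ ≤ (c - ‖A‖) * ‖y‖ := hball y (by simpa [Metric.mem_ball, dist_zero_right] using hy)
    have h2 : ‖A y‖ ≤ ‖A‖ * ‖y‖ := A.le_opNorm y
    calc ‖g y‖ = ‖A y + (g y - A y)‖ := by congr 1; abel
      _ ≤ ‖A y‖ + ‖g y - A y‖ := norm_add_le _ _
      _ ≤ ‖A‖ * ‖y‖ + (c - ‖A‖) * ‖y‖ := add_le_add h2 h1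
      _ = c * ‖y‖ := by ring
  -- summability on the domain of attraction
  have key : ∀ y : EuclideanSpace ℝ (Fin n),
      Tendsto (fun k => g^[k] y) atTop (𝓝 0) →
      Summable (fun k => ‖g^[k] y‖ ^ 2) := by
    intro y hy
    obtain ⟨N, hN⟩ := (Metric.tendsto_atTop.mp hy r rpos)
    have hN' : ‖g^[N] y‖ < r := by
      have := hN N le_rfl; simpa [dist_zero_right] using this
    have hbound : ∀ j : ℕ, ‖g^[N + j] y‖ ≤ c ^ j * ‖g^[N] y‖ ∧ ‖g^[N + j] y‖ < r := by
      intro j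
      induction j with
      | zero => simpa using hN'
      | succ j ih =>
        have hstep : g^[N + (j + 1)] y = g (g^[N + j] y) := by
          rw [← Nat.add_assoc, Function.iterate_succ_apply']
        constructor
        · rw [hstep]
          calc ‖g (g^[N + j] y)‖ ≤ c * ‖g^[N + j] y‖ := hcontr _ ih.2
            _ ≤ c * (c ^ j * ‖g^[N] y‖) := by
                exact mul_le_mul_of_nonneg_left ih.1 hc0.le
            _ = c ^ (j + 1) * ‖g^[N] y‖ := by ring
        · rw [hstep]
          calc ‖g (g^[N + j] y)‖ ≤ c * ‖g^[N + j] y‖ := hcontr _ ih.2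
            _ ≤ 1 * ‖g^[N + j] y‖ := by
                exact mul_le_mul_of_nonneg_right hc1.le (norm_nonneg _)
            _ = ‖g^[N + j] y‖ := one_mul _
            _ < r := ih.2
    rw [← summable_nat_add_iff N]
    have hgeo : Summable (fun j : ℕ => ‖g^[N] y‖ ^ 2 * (c ^ 2) ^ j) :=
      (summable_geometric_of_lt_one (by positivity) (by
        calc c ^ 2 < 1 ^ 2 := by nlinarith
          _ = 1 := one_pow 2)).mul_left _
    apply Summable.of_nonneg_of_le (fun j => by positivity) _ hgeo
    intro j
    have h1 := (hbound j).1
    calc ‖g^[j + N] y‖ ^ 2 = ‖g^[N + j] y‖ ^ 2 := by rw [Nat.add_comm]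
      _ ≤ (c ^ j * ‖g^[N] y‖) ^ 2 := by
          exact pow_le_pow_left₀ (norm_nonneg _) h1 2
      _ = ‖g^[N] y‖ ^ 2 * (c ^ 2) ^ j := by
          rw [mul_pow, ← pow_mul, mul_comm j 2, pow_mul, mul_comm]
  refine ⟨?_, ?_, ?_⟩
  · rintro y ⟨hyΔ, hy⟩
    have hsum := key y hy
    have heq := Summable.tsum_eq_zero_add hsum
    rw [hV]
    simp only [← Function.iterate_succ_apply]
    rw [heq]
    simp only [Function.iterate_zero_apply]
    ring
  · rw [hV]
    simp [Function.iterate_fixed hfix]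
  · rintro y ⟨hyΔ, hy⟩ hy0
    have hsum := key y hy
    have hle : ‖g^[0] y‖ ^ 2 ≤ ∑' k : ℕ, ‖g^[k] y‖ ^ 2 :=
      Summable.le_tsum hsum 0 (fun j _ => by positivity)
    rw [hV]
    have : (0:ℝ) < ‖y‖ ^ 2 := pow_pos (norm_pos_iff.mpr hy0) 2
    simp only [Function.iterate_zero_apply] at hle
    linarith
end

section
/- Let Δ ⊆ ℝⁿ be an open set containing 0 and let g : ℝⁿ → ℝⁿ be analytic on Δ, map Δ into itself, satisfy g(0) = 0 and ‖fderiv ℝ g 0‖ < 1. Define V(y) = ∑_{k=0}^∞ ‖g^[k](y)‖² on the domain of attraction DA(0). Then for every point y⁰ ∈ Δ lying on the topological boundary (frontier) of DA(0), V(y) tends to +∞ as y tends to y⁰ within DA(0), i.e. Tendsto V (𝓝[DA(0)] y⁰) atTop. -/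
open Filter Topology

theorem lyapunov_tendsto_atTop_on_frontier
    {n : ℕ} (Δ : Set (EuclideanSpace ℝ (Fin n)))
    (g : EuclideanSpace ℝ (Fin n) → EuclideanSpace ℝ (Fin n))
    (hΔ : IsOpen Δ) (h0 : (0 : EuclideanSpace ℝ (Fin n)) ∈ Δ)
    (hg : AnalyticOn ℝ g Δ) (hmaps : Set.MapsTo g Δ Δ)
    (hfix : g 0 = 0) (hd : ‖fderiv ℝ g 0‖ < 1) :
    ∀ y0 ∈ Δ, y0 ∈ frontier {y ∈ Δ | Tendsto (fun k => g^[k] y) atTop (𝓝 0)} →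
      Tendsto (fun y => ∑' k : ℕ, ‖g^[k] y‖ ^ 2)
        (𝓝[{y ∈ Δ | Tendsto (fun k => g^[k] y) atTop (𝓝 0)}] y0) atTop := by
  intro y0 hy0 hfr
  set DA := {y ∈ Δ | Tendsto (fun k => g^[k] y) atTop (𝓝 0)} with hDAdef
  set a := ‖fderiv ℝ g 0‖ with ha
  have ha0 : 0 ≤ a := norm_nonneg _
  set c : ℝ := (1 + a) / 2 with hc
  have hc0 : 0 ≤ c := by positivity
  have hc1 : c < 1 := by rw [hc]; linarith
  -- continuity of iterates
  have hmapsk : ∀ k, Set.MapsTo (g^[k]) Δ Δ := fun k => hmaps.iterate k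
  have hcontg : ContinuousOn g Δ := hg.continuousOn
  have hcontk : ∀ k, ContinuousOn (g^[k]) Δ := by
    intro k
    induction k with
    | zero => simpa using continuousOn_id
    | succ k ih =>
      rw [Function.iterate_succ']
      exact hcontg.comp ih (hmapsk k)
  -- derivative estimate
  have hdiff : DifferentiableAt ℝ g 0 :=
    ((hΔ.analyticOn_iff_analyticOnNhd.mp hg) 0 h0).differentiableAt
  have hfd : HasFDerivAt g (fderiv ℝ g 0) 0 := hdiff.hasFDerivAt
  have hε : (0:ℝ) < (1 - a) / 2 := by linarith
  have hev0 : ∀ᶠ y in 𝓝 (0 : EuclideanSpace ℝ (Fin n)), ‖g y‖ ≤ c * ‖y‖ := by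
    filter_upwards [hfd.isLittleO.def hε] with y hy
    simp only [hfix, sub_zero, zero_sub, norm_neg] at hy
    have h2 := norm_add_le (g y - (fderiv ℝ g 0) y) ((fderiv ℝ g 0) y)
    rw [sub_add_cancel] at h2
    have h3 := (fderiv ℝ g 0).le_opNorm y
    rw [← ha] at h3
    rw [hc]
    nlinarith [norm_nonneg y]
  obtain ⟨δ, hδ0, hδ⟩ := Metric.eventually_nhds_iff_ball.mp
    (hev0.and (hΔ.mem_nhds h0 : ∀ᶠ y in 𝓝 (0:EuclideanSpace ℝ (Fin n)), y ∈ Δ))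
  have hδ' : ∀ y : EuclideanSpace ℝ (Fin n), ‖y‖ < δ → ‖g y‖ ≤ c * ‖y‖ ∧ y ∈ Δ := by
    intro y hy
    exact hδ y (by simpa [Metric.mem_ball, dist_zero_right] using hy)
  -- geometric decay inside the ball
  have hiter : ∀ y : EuclideanSpace ℝ (Fin n), ‖y‖ < δ → ∀ k, ‖g^[k] y‖ ≤ c ^ k * ‖y‖ := by
    intro y hy k
    induction k with
    | zero => simp
    | succ k ih =>
      have hle1 : c ^ k * ‖y‖ ≤ ‖y‖ :=
        mul_le_of_le_one_left (norm_nonneg y) (pow_le_one₀ hc0 hc1.le)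
      have hlt : ‖g^[k] y‖ < δ := lt_of_le_of_lt (ih.trans hle1) hy
      rw [Function.iterate_succ_apply']
      calc ‖g (g^[k] y)‖ ≤ c * ‖g^[k] y‖ := (hδ' _ hlt).1
        _ ≤ c * (c ^ k * ‖y‖) := mul_le_mul_of_nonneg_left ih hc0
        _ = c ^ (k + 1) * ‖y‖ := by ring
  have hballDA : ∀ y : EuclideanSpace ℝ (Fin n), ‖y‖ < δ → y ∈ DA := by
    intro y hy
    refine ⟨(hδ' y hy).2, ?_⟩
    refine squeeze_zero_norm (fun k => hiter y hy k) ?_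
    have := (tendsto_pow_atTop_nhds_zero_of_lt_one hc0 hc1).mul_const ‖y‖
    simpa using this
  have hkey : ∀ u ∈ Δ, ∀ N, ‖g^[N] u‖ < δ → u ∈ DA := by
    intro u hu N hN
    have h1 : g^[N] u ∈ DA := hballDA _ hN
    refine ⟨hu, ?_⟩
    have h2 : Tendsto (fun k => g^[k + N] u) atTop (𝓝 0) := by
      have := h1.2
      simp only [Function.iterate_add_apply] at *
      exact this
    exact (tendsto_add_atTop_iff_nat N).mp h2
  -- y0 is not in DA
  have hy0n : y0 ∉ DA := by
    intro hmem
    obtain ⟨N, hN⟩ := (Metric.tendsto_atTop.mp hmem.2) δ hδ0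
    have hN' : ‖g^[N] y0‖ < δ := by simpa [dist_zero_right] using hN N le_rfl
    have hU : IsOpen (Δ ∩ (g^[N]) ⁻¹' Metric.ball 0 δ) :=
      (hcontk N).isOpen_inter_preimage hΔ Metric.isOpen_ball
    have hy0U : y0 ∈ Δ ∩ (g^[N]) ⁻¹' Metric.ball 0 δ := by
      refine ⟨hy0, ?_⟩
      simpa [Metric.mem_ball, dist_zero_right] using hN'
    have hsub : Δ ∩ (g^[N]) ⁻¹' Metric.ball 0 δ ⊆ DA := by
      rintro u ⟨hu, hu2⟩
      exact hkey u hu N (by simpa [Metric.mem_ball, dist_zero_right] using hu2)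
    have : y0 ∈ interior DA := mem_interior.2 ⟨_, hsub, hU, hy0U⟩
    exact hfr.2 this
  have hlow : ∀ k, δ ≤ ‖g^[k] y0‖ := by
    intro k
    by_contra h
    push_neg at h
    exact hy0n (hkey y0 hy0 k h)
  -- summability on DA
  have hsum : ∀ y ∈ DA, Summable (fun k => ‖g^[k] y‖ ^ 2) := by
    intro y hy
    obtain ⟨N, hN⟩ := (Metric.tendsto_atTop.mp hy.2) δ hδ0
    have hN' : ‖g^[N] y‖ < δ := by simpa [dist_zero_right] using hN N le_rfl
    rw [← summable_nat_add_iff N]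
    have hgeo : Summable (fun k : ℕ => δ ^ 2 * (c ^ 2) ^ k) :=
      (summable_geometric_of_lt_one (by positivity) (by nlinarith)).mul_left _
    refine Summable.of_nonneg_of_le (fun k => by positivity) (fun k => ?_) hgeo
    have h1 : ‖g^[k] (g^[N] y)‖ ≤ c ^ k * ‖g^[N] y‖ := hiter _ hN' k
    rw [Function.iterate_add_apply]
    have h2 : (0:ℝ) ≤ c ^ k := by positivity
    have h3 : (0:ℝ) ≤ ‖g^[k] (g^[N] y)‖ := norm_nonneg _
    have h4 : c ^ k * ‖g^[N] y‖ ≤ c ^ k * δ := mul_le_mul_of_nonneg_left hN'.le h2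
    calc ‖g^[k] (g^[N] y)‖ ^ 2 ≤ (c ^ k * ‖g^[N] y‖) ^ 2 := pow_le_pow_left₀ h3 h1 2
      _ ≤ (c ^ k * δ) ^ 2 := pow_le_pow_left₀ (by positivity) h4 2
      _ = δ ^ 2 * (c ^ 2) ^ k := by
          rw [mul_pow, ← pow_mul, mul_comm k 2, pow_mul, mul_comm]
  -- main estimate
  rw [tendsto_atTop]
  intro M
  set K : ℕ := ⌈M / (δ / 2) ^ 2⌉₊ + 1 with hK
  have hKM : M ≤ (K : ℝ) * (δ / 2) ^ 2 := by
    have h1 : M / (δ / 2) ^ 2 ≤ (K : ℝ) := by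
      have := Nat.le_ceil (M / (δ / 2) ^ 2)
      rw [hK]
      push_cast
      linarith
    rw [div_le_iff₀ (by positivity)] at h1
    linarith
  have hev : ∀ᶠ y in 𝓝[DA] y0, ∀ k ∈ Finset.range K, δ / 2 < ‖g^[k] y‖ := by
    rw [eventually_all_finset]
    intro k _
    apply eventually_nhdsWithin_of_eventually_nhds
    have hct : ContinuousAt (fun y => ‖g^[k] y‖) y0 :=
      ((hcontk k).continuousAt (hΔ.mem_nhds hy0)).norm
    exact hct.eventually (eventually_gt_nhds (lt_of_lt_of_le (by linarith) (hlow k)))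
  filter_upwards [hev, self_mem_nhdsWithin] with y hy hyDA
  have hs := hsum y hyDA
  calc M ≤ (K : ℝ) * (δ / 2) ^ 2 := hKM
    _ = ∑ _k ∈ Finset.range K, (δ / 2) ^ 2 := by
        rw [Finset.sum_const, Finset.card_range, nsmul_eq_mul]
    _ ≤ ∑ k ∈ Finset.range K, ‖g^[k] y‖ ^ 2 := by
        refine Finset.sum_le_sum fun k hk => ?_
        have := hy k hk
        nlinarith [hδ0]
    _ ≤ ∑' k, ‖g^[k] y‖ ^ 2 := Summable.sum_le_tsum _ (fun k _ => by positivity) hs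
end

section
/- Let Δ ⊆ ℝⁿ be an open set containing 0 and let g : ℝⁿ → ℝⁿ be analytic on Δ, map Δ into itself, satisfy g(0) = 0 and ‖fderiv ℝ g 0‖ < 1. If W : ℝⁿ → ℝ is continuous on the domain of attraction DA(0) and satisfies W(g(y)) − W(y) = −‖y‖² for all y ∈ DA(0) together with W(0) = 0, then W(y) = ∑_{k=0}^∞ ‖g^[k](y)‖² for every y ∈ DA(0); in particular the solution of this functional equation is unique among continuous functions on DA(0). -/
open Filter Topology

theorem lyapunov_functional_equation_unique
    {n : ℕ} (Δ : Set (EuclideanSpace ℝ (Fin n)))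
    (g : EuclideanSpace ℝ (Fin n) → EuclideanSpace ℝ (Fin n))
    (hΔ : IsOpen Δ) (h0 : (0 : EuclideanSpace ℝ (Fin n)) ∈ Δ)
    (hg : AnalyticOn ℝ g Δ) (hmaps : Set.MapsTo g Δ Δ)
    (hfix : g 0 = 0) (hd : ‖fderiv ℝ g 0‖ < 1)
    (W : EuclideanSpace ℝ (Fin n) → ℝ)
    (hWcont : ContinuousOn W {y ∈ Δ | Tendsto (fun k => g^[k] y) atTop (𝓝 0)})
    (hWeq : ∀ y ∈ {y ∈ Δ | Tendsto (fun k => g^[k] y) atTop (𝓝 0)},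
      W (g y) - W y = -‖y‖ ^ 2)
    (hW0 : W 0 = 0) :
    ∀ y ∈ {y ∈ Δ | Tendsto (fun k => g^[k] y) atTop (𝓝 0)},
      W y = ∑' k : ℕ, ‖g^[k] y‖ ^ 2 := by
  set S := {y ∈ Δ | Tendsto (fun k => g^[k] y) atTop (𝓝 0)} with hS
  intro y hy
  -- iterates stay in S
  have hiter : ∀ N : ℕ, g^[N] y ∈ S := by
    intro N
    constructor
    · induction N with
      | zero => exact hy.1
      | succ N ih => rw [Function.iterate_succ_apply']; exact hmaps ih
    · have : (fun k => g^[k] (g^[N] y)) = fun k => g^[k + N] y := by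
        funext k
        exact (Function.iterate_add_apply g k N y).symm
      rw [this]
      exact hy.2.comp (tendsto_add_atTop_nat N)
  -- telescoping sum
  have htel : ∀ N : ℕ, ∑ k ∈ Finset.range N, ‖g^[k] y‖ ^ 2 = W y - W (g^[N] y) := by
    intro N
    induction N with
    | zero => simp
    | succ N ih =>
      rw [Finset.sum_range_succ, ih, Function.iterate_succ_apply']
      have := hWeq (g^[N] y) (hiter N)
      linarith
  have h0S : (0 : EuclideanSpace ℝ (Fin n)) ∈ S := by
    refine ⟨h0, ?_⟩
    have : ∀ k : ℕ, g^[k] (0 : EuclideanSpace ℝ (Fin n)) = 0 := fun k =>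
      Function.iterate_fixed hfix k
    simp only [this]
    exact tendsto_const_nhds
  -- W (g^[N] y) → 0
  have hWt : Tendsto (fun N => W (g^[N] y)) atTop (𝓝 0) := by
    have h1 : Tendsto (fun N => g^[N] y) atTop (𝓝[S] 0) := by
      rw [tendsto_nhdsWithin_iff]
      exact ⟨hy.2, Eventually.of_forall hiter⟩
    have := (hWcont 0 h0S).tendsto.comp h1
    rwa [hW0] at this
  have hlim : Tendsto (fun N => ∑ k ∈ Finset.range N, ‖g^[k] y‖ ^ 2) atTop (𝓝 (W y)) := by
    simp only [htel]
    have := tendsto_const_nhds (x := W y) (f := atTop (α := ℕ)) |>.sub hWt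
    simpa using this
  have hsum : HasSum (fun k => ‖g^[k] y‖ ^ 2) (W y) :=
    (hasSum_iff_tendsto_nat_of_nonneg (fun k => by positivity) _).2 hlim
  exact hsum.tsum_eq.symm
end

section
/- Let Ω ⊆ ℝⁿ and D ⊆ ℝᵐ be open sets, let f : ℝⁿ × ℝᵐ → ℝⁿ be analytic on Ω × D, let D₁ ⊆ D be open, and let φ : ℝᵐ → ℝⁿ be analytic on D₁ with, for every α ∈ D₁: φ(α) ∈ Ω, φ(α) = f(φ(α), α), ‖∂ₓf(φ(α), α)‖ < 1, and x ↦ f(x, α) maps Ω into Ω. Then the set G = { (x, α) : α ∈ D₁ and x ∈ DA(φ(α), α) } is an open subset of ℝⁿ × ℝᵐ, where DA(φ(α), α) = {x ∈ Ω : (f(·, α))^[k](x) → φ(α) as k → ∞}. -/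
/-!
Near the attracting fixed point `(φ α₀, α₀)` the partial derivative `∂ₓf` has norm below some
`K < 1`, so by the mean value inequality every `f(·, α)` with `α` close to `α₀` is a
`K`-contraction on a fixed ball `B` around `φ α₀`, and the continuity of `φ` keeps the fixed point
`φ α` well inside `B`. If `x₀` is attracted to `φ α₀`, some iterate `f(·, α₀)^[N] x₀` lies close
to `φ α₀`; since `(x, α) ↦ f(·, α)^[N] x` is continuous, the same holds for all `(x, α)` near
`(x₀, α₀)`, and from there the contraction takes the orbit to `φ α`.
-/

open Filter Topology Metric Set NNReal

theorem ContinuousOn.parametric_iterate {X Y : Type*} [TopologicalSpace X] [TopologicalSpace Y]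
    {f : X × Y → X} {s : Set X} {t : Set Y} (hf : ContinuousOn f (s ×ˢ t))
    (hmaps : ∀ y ∈ t, MapsTo (fun x => f (x, y)) s s) (N : ℕ) :
    ContinuousOn (fun p : X × Y => (fun x => f (x, p.2))^[N] p.1) (s ×ˢ t) := by
  induction N with
  | zero => exact continuousOn_fst
  | succ N ih =>
    simp only [Function.iterate_succ_apply']
    exact hf.comp (ih.prodMk continuousOn_snd)
      fun p hp => ⟨(hmaps p.2 hp.2).iterate N hp.1, hp.2⟩

theorem LipschitzOnWith.tendsto_iterate_of_isFixedPt {X : Type*} [PseudoMetricSpace X]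
    {g : X → X} {K : ℝ≥0} {p x : X} {r : ℝ} (hK : K < 1)
    (hg : LipschitzOnWith K g (closedBall p r)) (hp : Function.IsFixedPt g p)
    (hx : x ∈ closedBall p r) :
    Tendsto (fun k => g^[k] x) atTop (𝓝 p) := by
  have hr : 0 ≤ r := dist_nonneg.trans hx
  have hdist : ∀ y ∈ closedBall p r, dist (g y) p ≤ K * dist y p := fun y hy => by
    simpa only [hp.eq] using hg.dist_le_mul y hy p (mem_closedBall_self hr)
  have hmaps : MapsTo g (closedBall p r) (closedBall p r) := fun y hy =>
    (hdist y hy).trans (mul_le_of_le_one_left dist_nonneg (mod_cast hK.le)) |>.trans hy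
  have hgeom : ∀ k, dist (g^[k] x) p ≤ K ^ k * dist x p := by
    intro k
    induction k with
    | zero => simp
    | succ k ih =>
      calc dist (g^[k + 1] x) p = dist (g (g^[k] x)) p := by rw [Function.iterate_succ_apply']
        _ ≤ K * dist (g^[k] x) p := hdist _ (hmaps.iterate k hx)
        _ ≤ K * (K ^ k * dist x p) := by gcongr
        _ = K ^ (k + 1) * dist x p := by ring
  refine tendsto_iff_dist_tendsto_zero.2 (squeeze_zero (fun _ => dist_nonneg) hgeom ?_)
  simpa using (tendsto_pow_atTop_nhds_zero_of_lt_one K.2 (mod_cast hK)).mul_const (dist x p)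

theorem ContDiffAt.exists_pos_eventually_lipschitzOnWith_ball {E F G : Type*}
    [NormedAddCommGroup E] [NormedSpace ℝ E] [NormedAddCommGroup F] [NormedSpace ℝ F]
    [NormedAddCommGroup G] [NormedSpace ℝ G] {f : E × F → G} {x₀ : E} {α₀ : F} {K : ℝ≥0}
    (hf : ContDiffAt ℝ 1 f (x₀, α₀)) (hK : ‖fderiv ℝ (fun x => f (x, α₀)) x₀‖₊ < K) :
    ∃ ρ > 0, ∀ᶠ α in 𝓝 α₀, LipschitzOnWith K (fun x => f (x, α)) (ball x₀ ρ) := by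
  have hsection : ∀ p : E × F, ContDiffAt ℝ 1 f p →
      ContDiffAt ℝ 1 (fun x => f (x, p.2)) p.1 := fun p hp =>
    hp.comp p.1 (contDiffAt_id.prodMk contDiffAt_const)
  have hpartial :
      ContinuousAt (fun p : E × F => fderiv ℝ (fun x => f (x, p.2)) p.1) (x₀, α₀) := by
    refine (ContDiffAt.fderiv (f := fun (p : E × F) (x : E) => f (x, p.2)) ?_ contDiffAt_fst
      (n := 1) (m := 0) (by norm_num)).continuousAt
    exact hf.comp (f := fun q : (E × F) × E => (q.2, q.1.2)) _ (by fun_prop)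
  have hev : ∀ᶠ p in 𝓝 (x₀, α₀), ContDiffAt ℝ 1 f p ∧
      ‖fderiv ℝ (fun x => f (x, p.2)) p.1‖₊ < K :=
    (hf.eventually (by simp)).and
      ((continuous_nnnorm.continuousAt.comp hpartial).eventually_lt continuousAt_const hK)
  obtain ⟨ρ, hρ, hball⟩ := eventually_nhds_iff_ball.1 hev
  refine ⟨ρ, hρ, eventually_of_mem (ball_mem_nhds α₀ hρ) fun α hα => ?_⟩
  have hmem : ∀ x ∈ ball x₀ ρ, (x, α) ∈ ball (x₀, α₀) ρ := fun x hx => by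
    simpa [← ball_prod_same] using And.intro hx hα
  exact (convex_ball x₀ ρ).lipschitzOnWith_of_nnnorm_fderiv_le (𝕜 := ℝ)
    (fun x hx => (hsection _ (hball _ (hmem x hx)).1).differentiableAt one_ne_zero)
    (fun x hx => (hball _ (hmem x hx)).2.le)

theorem union_of_domains_of_attraction_isOpen_general
    {n m : ℕ} (Ω : Set (EuclideanSpace ℝ (Fin n))) (D : Set (EuclideanSpace ℝ (Fin m)))
    (f : EuclideanSpace ℝ (Fin n) × EuclideanSpace ℝ (Fin m) → EuclideanSpace ℝ (Fin n))
    (hΩ : IsOpen Ω)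
    (hf : AnalyticOn ℝ f (Ω ×ˢ D))
    (D₁ : Set (EuclideanSpace ℝ (Fin m))) (hD₁open : IsOpen D₁) (hD₁sub : D₁ ⊆ D)
    (φ : EuclideanSpace ℝ (Fin m) → EuclideanSpace ℝ (Fin n))
    (hφ : AnalyticOn ℝ φ D₁)
    (hφΩ : ∀ α ∈ D₁, φ α ∈ Ω)
    (hφfix : ∀ α ∈ D₁, φ α = f (φ α, α))
    (hφd : ∀ α ∈ D₁, ‖fderiv ℝ (fun x => f (x, α)) (φ α)‖ < 1)
    (hmaps : ∀ α ∈ D₁, Set.MapsTo (fun x => f (x, α)) Ω Ω) :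
    IsOpen {p : EuclideanSpace ℝ (Fin n) × EuclideanSpace ℝ (Fin m) |
      p.2 ∈ D₁ ∧ p.1 ∈ Ω ∧
      Tendsto (fun k => (fun x => f (x, p.2))^[k] p.1) atTop (𝓝 (φ p.2))} := by
  have hU : IsOpen (Ω ×ˢ D₁) := hΩ.prod hD₁open
  have hfU : AnalyticOnNhd ℝ f (Ω ×ˢ D₁) :=
    hU.analyticOn_iff_analyticOnNhd.1 (hf.mono (prod_mono_right hD₁sub))
  rw [isOpen_iff_mem_nhds]
  rintro ⟨x₀, α₀⟩ ⟨hα₀, hx₀, htend⟩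
  obtain ⟨K, hK, hK1⟩ :=
    exists_between (show ‖fderiv ℝ (fun x => f (x, α₀)) (φ α₀)‖₊ < 1 from hφd α₀ hα₀)
  obtain ⟨ρ, hρ, hLip⟩ :=
    (hfU (φ α₀, α₀) ⟨hφΩ α₀ hα₀, hα₀⟩).contDiffAt.exists_pos_eventually_lipschitzOnWith_ball hK
  obtain ⟨N, hN⟩ := (htend.eventually (ball_mem_nhds (φ α₀) (half_pos hρ))).exists
  have hφα : ContinuousAt (fun p : _ × _ => φ p.2) (x₀, α₀) :=
    (hφ.continuousOn.continuousAt (hD₁open.mem_nhds hα₀)).comp continuousAt_snd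
  have hiter : ContinuousAt (fun p : _ × _ => (fun x => f (x, p.2))^[N] p.1) (x₀, α₀) :=
    (hfU.continuousOn.parametric_iterate hmaps N).continuousAt (hU.mem_nhds ⟨hx₀, hα₀⟩)
  filter_upwards [hU.mem_nhds ⟨hx₀, hα₀⟩, continuousAt_snd.eventually hLip,
    (hiter.dist hφα).eventually_lt continuousAt_const hN,
    hφα.eventually (ball_mem_nhds (φ α₀) (half_pos hρ))]
    with ⟨x, α⟩ ⟨hx, hα⟩ hLipα hNα hφαρ
  refine ⟨hα, hx, (tendsto_add_atTop_iff_nat N).1 ?_⟩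
  simp only [Function.iterate_add_apply]
  refine (hLipα.mono fun y hy => ?_).tendsto_iterate_of_isFixedPt hK1 (hφfix α hα).symm hNα.le
  calc dist y (φ α₀) ≤ dist y (φ α) + dist (φ α) (φ α₀) := dist_triangle _ _ _
    _ < ρ / 2 + ρ / 2 := add_lt_add_of_le_of_lt hy hφαρ
    _ = ρ := add_halves ρ

theorem union_of_domains_of_attraction_isOpen
    {n m : ℕ} (Ω : Set (EuclideanSpace ℝ (Fin n))) (D : Set (EuclideanSpace ℝ (Fin m)))
    (f : EuclideanSpace ℝ (Fin n) × EuclideanSpace ℝ (Fin m) → EuclideanSpace ℝ (Fin n))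
    (hΩ : IsOpen Ω) (hD : IsOpen D)
    (hf : AnalyticOn ℝ f (Ω ×ˢ D))
    (D₁ : Set (EuclideanSpace ℝ (Fin m))) (hD₁open : IsOpen D₁) (hD₁sub : D₁ ⊆ D)
    (φ : EuclideanSpace ℝ (Fin m) → EuclideanSpace ℝ (Fin n))
    (hφ : AnalyticOn ℝ φ D₁)
    (hφΩ : ∀ α ∈ D₁, φ α ∈ Ω)
    (hφfix : ∀ α ∈ D₁, φ α = f (φ α, α))
    (hφd : ∀ α ∈ D₁, ‖fderiv ℝ (fun x => f (x, α)) (φ α)‖ < 1)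
    (hmaps : ∀ α ∈ D₁, Set.MapsTo (fun x => f (x, α)) Ω Ω) :
    IsOpen {p : EuclideanSpace ℝ (Fin n) × EuclideanSpace ℝ (Fin m) |
      p.2 ∈ D₁ ∧ p.1 ∈ Ω ∧
      Tendsto (fun k => (fun x => f (x, p.2))^[k] p.1) atTop (𝓝 (φ p.2))} :=
  union_of_domains_of_attraction_isOpen_general Ω D f hΩ hf D₁ hD₁open hD₁sub φ hφ hφΩ hφfix hφd
    hmaps
end

section
/- Let Ω ⊆ ℝⁿ and D ⊆ ℝᵐ be open sets, let f : ℝⁿ × ℝᵐ → ℝⁿ be analytic on Ω × D, let D₁ ⊆ D be open, and let φ : ℝᵐ → ℝⁿ be analytic on D₁ with, for every α ∈ D₁: φ(α) ∈ Ω, φ(α) = f(φ(α), α), ‖∂ₓf(φ(α), α)‖ < 1, and x ↦ f(x, α) maps Ω into Ω. Then for every α ∈ D₁ there exist an open neighborhood U_α ⊆ D₁ of α and an open neighborhood U of φ(α) such that for every α' ∈ U_α one has φ(α') ∈ U and U ⊆ DA(φ(α'), α'); in particular, for every α' ∈ U_α both maneuvers α → α' and α' → α are successful, i.e. the iterates of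 f(·, α') starting at φ(α) converge to φ(α') and the iterates of f(·, α) starting at φ(α') converge to φ(α). -/
open Filter Topology Metric

theorem local_maneuvers_successful
    {n m : ℕ} (Ω : Set (EuclideanSpace ℝ (Fin n))) (D : Set (EuclideanSpace ℝ (Fin m)))
    (f : EuclideanSpace ℝ (Fin n) × EuclideanSpace ℝ (Fin m) → EuclideanSpace ℝ (Fin n))
    (hΩ : IsOpen Ω) (hD : IsOpen D)
    (hf : AnalyticOn ℝ f (Ω ×ˢ D))
    (D₁ : Set (EuclideanSpace ℝ (Fin m))) (hD₁open : IsOpen D₁) (hD₁sub : D₁ ⊆ D)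
    (φ : EuclideanSpace ℝ (Fin m) → EuclideanSpace ℝ (Fin n))
    (hφ : AnalyticOn ℝ φ D₁)
    (hφΩ : ∀ α ∈ D₁, φ α ∈ Ω)
    (hφfix : ∀ α ∈ D₁, φ α = f (φ α, α))
    (hφd : ∀ α ∈ D₁, ‖fderiv ℝ (fun x => f (x, α)) (φ α)‖ < 1)
    (hmaps : ∀ α ∈ D₁, Set.MapsTo (fun x => f (x, α)) Ω Ω) :
    ∀ α ∈ D₁, ∃ Uα : Set (EuclideanSpace ℝ (Fin m)), IsOpen Uα ∧ α ∈ Uα ∧ Uα ⊆ D₁ ∧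
      ∃ U : Set (EuclideanSpace ℝ (Fin n)), IsOpen U ∧ φ α ∈ U ∧
        ∀ α' ∈ Uα, φ α' ∈ U ∧
          U ⊆ {x ∈ Ω | Tendsto (fun k => (fun x => f (x, α'))^[k] x) atTop (𝓝 (φ α'))} ∧
          Tendsto (fun k => (fun x => f (x, α'))^[k] (φ α)) atTop (𝓝 (φ α')) ∧
          Tendsto (fun k => (fun x => f (x, α))^[k] (φ α')) atTop (𝓝 (φ α)) := by
  intro α hα
  have hΩD : IsOpen (Ω ×ˢ D) := hΩ.prod hD
  have hfN : AnalyticOnNhd ℝ f (Ω ×ˢ D) := hΩD.analyticOn_iff_analyticOnNhd.mp hf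
  -- partial derivative in x
  have hpd : ∀ x ∈ Ω, ∀ β ∈ D, HasFDerivAt (fun y => f (y, β))
      ((fderiv ℝ f (x, β)).comp (ContinuousLinearMap.inl ℝ _ _)) x := by
    intro x hx β hβ
    have h1 : HasFDerivAt f (fderiv ℝ f (x, β)) (x, β) :=
      ((hfN (x, β) ⟨hx, hβ⟩).differentiableAt).hasFDerivAt
    exact h1.comp x (hasFDerivAt_prodMk_left x β)
  set N : EuclideanSpace ℝ (Fin n) × EuclideanSpace ℝ (Fin m) → ℝ :=
    fun p => ‖(fderiv ℝ f p).comp (ContinuousLinearMap.inl ℝ _ _)‖ with hN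
  have hNcont : ContinuousOn N (Ω ×ˢ D) := by
    have h1 : ContinuousOn (fderiv ℝ f) (Ω ×ˢ D) := (hfN.fderiv).continuousOn
    have h2 : Continuous (fun A : (EuclideanSpace ℝ (Fin n) × EuclideanSpace ℝ (Fin m)) →L[ℝ]
        EuclideanSpace ℝ (Fin n) =>
        A.comp (ContinuousLinearMap.inl ℝ (EuclideanSpace ℝ (Fin n)) (EuclideanSpace ℝ (Fin m)))) :=
      ((ContinuousLinearMap.compL ℝ (EuclideanSpace ℝ (Fin n))
          (EuclideanSpace ℝ (Fin n) × EuclideanSpace ℝ (Fin m))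
          (EuclideanSpace ℝ (Fin n))).flip
        (ContinuousLinearMap.inl ℝ (EuclideanSpace ℝ (Fin n)) (EuclideanSpace ℝ (Fin m)))).continuous
    exact (h2.comp_continuousOn h1).norm
  have hαD : α ∈ D := hD₁sub hα
  have hp₀ : (φ α, α) ∈ Ω ×ˢ D := ⟨hφΩ α hα, hαD⟩
  set L : ℝ := ‖fderiv ℝ (fun x => f (x, α)) (φ α)‖ with hLdef
  have hL1 : L < 1 := hφd α hα
  have hL0 : (0:ℝ) ≤ L := norm_nonneg _
  set c : ℝ := (L + 1) / 2 with hcdef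
  have hLc : L < c := by rw [hcdef]; linarith
  have hc1 : c < 1 := by rw [hcdef]; linarith
  have hc0 : (0:ℝ) ≤ c := by rw [hcdef]; linarith
  have hNform : ∀ x ∈ Ω, ∀ β ∈ D, fderiv ℝ (fun y => f (y, β)) x
      = (fderiv ℝ f (x, β)).comp (ContinuousLinearMap.inl ℝ _ _) :=
    fun x hx β hβ => (hpd x hx β hβ).fderiv
  have hNp₀ : N (φ α, α) < c := by
    rw [hN]; dsimp only
    rw [← hNform (φ α) (hφΩ α hα) α hαD]
    exact hLc
  -- open set where the partial derivative is small
  have hS : IsOpen ((Ω ×ˢ D) ∩ N ⁻¹' (Set.Iio c)) :=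
    hNcont.isOpen_inter_preimage hΩD isOpen_Iio
  obtain ⟨ε₁, hε₁pos, hε₁⟩ := Metric.isOpen_iff.mp hS (φ α, α) ⟨hp₀, hNp₀⟩
  set ε : ℝ := ε₁ / 2 with hεdef
  have hεpos : 0 < ε := by positivity
  have hεlt : ε < ε₁ := by rw [hεdef]; linarith
  -- key consequence of hε₁
  have hball : ∀ x ∈ closedBall (φ α) ε, ∀ β, dist β α < ε₁ → β ∈ D →
      x ∈ Ω ∧ ‖fderiv ℝ (fun y => f (y, β)) x‖ ≤ c := by
    intro x hx β hβ hβD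
    have hmem : (x, β) ∈ ball (φ α, α) ε₁ := by
      rw [mem_ball, Prod.dist_eq]
      exact max_lt (lt_of_le_of_lt (mem_closedBall.mp hx) hεlt) hβ
    have := hε₁ hmem
    refine ⟨this.1.1, ?_⟩
    rw [hNform x this.1.1 β hβD]
    exact le_of_lt this.2
  have hsubΩ : closedBall (φ α) ε ⊆ Ω := by
    intro x hx
    exact (hball x hx α (by simpa using hε₁pos) hαD).1
  -- continuity of φ at α
  have hφcont : ContinuousAt φ α :=
    (hφ.continuousOn.continuousWithinAt hα).continuousAt (hD₁open.mem_nhds hα)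
  have hεc : 0 < (1 - c) * ε / 2 := by nlinarith
  obtain ⟨δ₀, hδ₀pos, hδ₀⟩ := Metric.continuousAt_iff.mp hφcont _ hεc
  obtain ⟨δ₁, hδ₁pos, hδ₁⟩ := Metric.isOpen_iff.mp hD₁open α hα
  set δ : ℝ := min δ₀ (min ε δ₁) with hδdef
  have hδpos : 0 < δ := lt_min hδ₀pos (lt_min hεpos hδ₁pos)
  have hδε : δ ≤ ε := le_trans (min_le_right _ _) (min_le_left _ _)
  have hUαsub : ball α δ ⊆ D₁ := fun β hβ =>
    hδ₁ (mem_ball.mpr (lt_of_lt_of_le (mem_ball.mp hβ) (le_trans (min_le_right _ _) (min_le_right _ _))))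
  -- the key property
  have key : ∀ α' ∈ ball α δ, φ α' ∈ ball (φ α) ε ∧
      ∀ x ∈ closedBall (φ α) ε,
        Tendsto (fun k => (fun y => f (y, α'))^[k] x) atTop (𝓝 (φ α')) := by
    intro α' hα'
    have hα'D₁ : α' ∈ D₁ := hUαsub hα'
    have hα'D : α' ∈ D := hD₁sub hα'D₁
    have hdistδ : dist α' α < δ := mem_ball.mp hα'
    have hd : dist (φ α') (φ α) < (1 - c) * ε / 2 :=
      hδ₀ (lt_of_lt_of_le hdistδ (min_le_left _ _))
    have hdε : dist (φ α') (φ α) < ε := by nlinarith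
    have hφ'cb : φ α' ∈ closedBall (φ α) ε := mem_closedBall.mpr (le_of_lt hdε)
    refine ⟨mem_ball.mpr hdε, ?_⟩
    have hα'ε₁ : dist α' α < ε₁ := lt_trans (lt_of_lt_of_le hdistδ hδε) hεlt
    have hbound : ∀ z ∈ closedBall (φ α) ε, ‖fderiv ℝ (fun y => f (y, α')) z‖ ≤ c :=
      fun z hz => (hball z hz α' hα'ε₁ hα'D).2
    have hdiff : ∀ z ∈ closedBall (φ α) ε, DifferentiableAt ℝ (fun y => f (y, α')) z :=
      fun z hz => (hpd z (hball z hz α' hα'ε₁ hα'D).1 α' hα'D).differentiableAt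
    have hMVT : ∀ x ∈ closedBall (φ α) ε, ∀ y ∈ closedBall (φ α) ε,
        ‖f (y, α') - f (x, α')‖ ≤ c * ‖y - x‖ := fun x hx y hy =>
      (convex_closedBall _ _).norm_image_sub_le_of_norm_fderiv_le hdiff hbound hx hy
    have hfix' : f (φ α', α') = φ α' := (hφfix α' hα'D₁).symm
    -- contraction toward the fixed point
    have hcontr : ∀ y ∈ closedBall (φ α) ε,
        dist (f (y, α')) (φ α') ≤ c * dist y (φ α') := by
      intro y hy
      rw [dist_eq_norm, dist_eq_norm]
      calc ‖f (y, α') - φ α'‖ = ‖f (y, α') - f (φ α', α')‖ := by rw [hfix']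
        _ ≤ c * ‖y - φ α'‖ := hMVT (φ α') hφ'cb y hy
    -- invariance of the closed ball
    have hinv : ∀ y ∈ closedBall (φ α) ε, f (y, α') ∈ closedBall (φ α) ε := by
      intro y hy
      have h1 : dist (f (y, α')) (φ α) ≤ dist (f (y, α')) (φ α') + dist (φ α') (φ α) :=
        dist_triangle _ _ _
      have h2 := hcontr y hy
      have h3 : dist y (φ α') ≤ dist y (φ α) + dist (φ α) (φ α') := dist_triangle _ _ _
      have h4 : dist y (φ α) ≤ ε := mem_closedBall.mp hy
      have h5 : dist (φ α) (φ α') = dist (φ α') (φ α) := dist_comm _ _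
      rw [mem_closedBall]
      nlinarith [dist_nonneg (x := φ α') (y := φ α)]
    intro x hx
    have hiter : ∀ k : ℕ, (fun y => f (y, α'))^[k] x ∈ closedBall (φ α) ε ∧
        dist ((fun y => f (y, α'))^[k] x) (φ α') ≤ c ^ k * dist x (φ α') := by
      intro k
      induction k with
      | zero => simpa using hx
      | succ k ih =>
        rw [Function.iterate_succ_apply']
        refine ⟨hinv _ ih.1, ?_⟩
        calc dist (f ((fun y => f (y, α'))^[k] x, α')) (φ α')
            ≤ c * dist ((fun y => f (y, α'))^[k] x) (φ α') := hcontr _ ih.1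
          _ ≤ c * (c ^ k * dist x (φ α')) := by
              exact mul_le_mul_of_nonneg_left ih.2 hc0
          _ = c ^ (k + 1) * dist x (φ α') := by ring
    rw [tendsto_iff_dist_tendsto_zero]
    have h0 : Tendsto (fun k : ℕ => c ^ k * dist x (φ α')) atTop (𝓝 0) := by
      simpa using (tendsto_pow_atTop_nhds_zero_of_lt_one hc0 hc1).mul_const (dist x (φ α'))
    exact squeeze_zero (fun k => dist_nonneg) (fun k => (hiter k).2) h0
  refine ⟨ball α δ, isOpen_ball, mem_ball_self hδpos, hUαsub,
    ball (φ α) ε, isOpen_ball, mem_ball_self hεpos, ?_⟩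
  intro α' hα'
  obtain ⟨hφ'U, htend⟩ := key α' hα'
  obtain ⟨-, htendα⟩ := key α (mem_ball_self hδpos)
  refine ⟨hφ'U, ?_, ?_, ?_⟩
  · intro x hx
    exact ⟨hsubΩ (ball_subset_closedBall hx), htend x (ball_subset_closedBall hx)⟩
  · exact htend (φ α) (mem_closedBall_self (le_of_lt hεpos))
  · exact htendα (φ α') (ball_subset_closedBall hφ'U)
end

section
/- Let Ω ⊆ ℝⁿ and D ⊆ ℝᵐ be open sets, let f : ℝⁿ × ℝᵐ → ℝⁿ be analytic on Ω × D, let D₁ ⊆ D be open and connected, and let φ : ℝᵐ → ℝⁿ be analytic on D₁ with, for every α ∈ D₁: φ(α) ∈ Ω, φ(α) = f(φ(α), α), ‖∂ₓf(φ(α), α)‖ < 1, and x ↦ f(x, α) maps Ω into Ω. Then for any α*, α** ∈ D₁ there exist p ∈ ℕ and control values α⁰ = α*, α¹, …, αᵖ, αᵖ⁺¹ = α** in D₁ such that each maneuver αⁱ → αⁱ⁺¹ (i = 0, …, p) is successful on the path φ, i.e. for each i the iterates of x ↦ f(x, αⁱ⁺¹) starting at φ(αⁱ) converge to φ(αⁱ⁺¹).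 -/
open Filter Topology

theorem finite_chain_of_successful_maneuvers
    {n m : ℕ} (Ω : Set (EuclideanSpace ℝ (Fin n))) (D : Set (EuclideanSpace ℝ (Fin m)))
    (f : EuclideanSpace ℝ (Fin n) × EuclideanSpace ℝ (Fin m) → EuclideanSpace ℝ (Fin n))
    (hΩ : IsOpen Ω) (hD : IsOpen D)
    (hf : AnalyticOn ℝ f (Ω ×ˢ D))
    (D₁ : Set (EuclideanSpace ℝ (Fin m))) (hD₁open : IsOpen D₁)
    (hD₁conn : IsConnected D₁) (hD₁sub : D₁ ⊆ D)
    (φ : EuclideanSpace ℝ (Fin m) → EuclideanSpace ℝ (Fin n))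
    (hφ : AnalyticOn ℝ φ D₁)
    (hφΩ : ∀ α ∈ D₁, φ α ∈ Ω)
    (hφfix : ∀ α ∈ D₁, φ α = f (φ α, α))
    (hφd : ∀ α ∈ D₁, ‖fderiv ℝ (fun x => f (x, α)) (φ α)‖ < 1)
    (hmaps : ∀ α ∈ D₁, Set.MapsTo (fun x => f (x, α)) Ω Ω)
    (αs αss : EuclideanSpace ℝ (Fin m)) (hαs : αs ∈ D₁) (hαss : αss ∈ D₁) :
    ∃ (p : ℕ) (a : ℕ → EuclideanSpace ℝ (Fin m)),
      a 0 = αs ∧ a (p + 1) = αss ∧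
      (∀ i ≤ p + 1, a i ∈ D₁) ∧
      (∀ i ≤ p, Tendsto (fun k => (fun x => f (x, a (i + 1)))^[k] (φ (a i)))
        atTop (𝓝 (φ (a (i + 1))))) := by
  classical
  have hopen : IsOpen (Ω ×ˢ D) := hΩ.prod hD
  have hfN : AnalyticOnNhd ℝ f (Ω ×ˢ D) := (hopen.analyticOn_iff_analyticOnNhd).1 hf
  have hφN : AnalyticOnNhd ℝ φ D₁ := (hD₁open.analyticOn_iff_analyticOnNhd).1 hφ
  have hC1 : ContDiffOn ℝ 1 f (Ω ×ˢ D) := hfN.contDiffOn hopen.uniqueDiffOn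
  have hdf_cont : ContinuousOn (fun z => fderiv ℝ f z) (Ω ×ˢ D) :=
    hC1.continuousOn_fderiv_of_isOpen hopen le_rfl
  set F : EuclideanSpace ℝ (Fin n) × EuclideanSpace ℝ (Fin m) →
      (EuclideanSpace ℝ (Fin n) →L[ℝ] EuclideanSpace ℝ (Fin n)) :=
    fun z => (fderiv ℝ f z).comp
      (ContinuousLinearMap.inl ℝ (EuclideanSpace ℝ (Fin n)) (EuclideanSpace ℝ (Fin m))) with hFdef
  have hF_cont : ContinuousOn F (Ω ×ˢ D) := hdf_cont.clm_comp continuousOn_const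
  have hpart : ∀ x α', (x, α') ∈ Ω ×ˢ D →
      HasFDerivAt (fun y => f (y, α')) (F (x, α')) x := by
    intro x α' hz
    have h1 : HasFDerivAt f (fderiv ℝ f (x, α')) (x, α') :=
      ((hfN _ hz).differentiableAt).hasFDerivAt
    exact h1.comp x (hasFDerivAt_prodMk_left x α')
  -- Key local lemma: around each point of D₁ there is a neighborhood where every
  -- maneuver between two of its points is successful.
  have key : ∀ α ∈ D₁, ∃ V : Set (EuclideanSpace ℝ (Fin m)), IsOpen V ∧ α ∈ V ∧ V ⊆ D₁ ∧
      ∀ β ∈ V, ∀ γ ∈ V,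
        Tendsto (fun k => (fun x => f (x, γ))^[k] (φ β)) atTop (𝓝 (φ γ)) := by
    intro α hα
    have hz : (φ α, α) ∈ Ω ×ˢ D := ⟨hφΩ α hα, hD₁sub hα⟩
    have hc0 : ‖F (φ α, α)‖ < 1 := by
      have hfd := (hpart _ _ hz).fderiv
      have := hφd α hα
      rwa [hfd] at this
    set c : ℝ := (‖F (φ α, α)‖ + 1) / 2 with hcdef
    have hc1 : c < 1 := by rw [hcdef]; linarith
    have hcnn : 0 ≤ c := by
      have := norm_nonneg (F (φ α, α)); rw [hcdef]; linarith
    have hclt : ‖F (φ α, α)‖ < c := by rw [hcdef]; linarith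
    have hFat : ContinuousAt F (φ α, α) := hF_cont.continuousAt (hopen.mem_nhds hz)
    have hev : ∀ᶠ z in 𝓝 (φ α, α), ‖F z‖ < c ∧ z ∈ Ω ×ˢ D := by
      have h1 : ∀ᶠ z in 𝓝 (φ α, α), ‖F z‖ < c :=
        hFat.norm.eventually_lt continuousAt_const hclt
      have h2 : ∀ᶠ z in 𝓝 (φ α, α), z ∈ Ω ×ˢ D := hopen.mem_nhds hz
      exact h1.and h2
    obtain ⟨r, hr0, hrsub⟩ := Metric.eventually_nhds_iff_ball.1 hev
    set ε : ℝ := r / 2 with hεdef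
    have hε0 : 0 < ε := by positivity
    have hφc : ContinuousAt φ α := (hφN α hα).continuousAt
    have hev2 : ∀ᶠ α' in 𝓝 α, dist (φ α') (φ α) < ε / 4 := by
      have : Metric.ball (φ α) (ε / 4) ∈ 𝓝 (φ α) :=
        Metric.ball_mem_nhds _ (by positivity)
      exact hφc.eventually_mem this
    obtain ⟨δ, hδ0, hδ⟩ := Metric.eventually_nhds_iff_ball.1 hev2
    refine ⟨Metric.ball α (min δ ε) ∩ D₁, Metric.isOpen_ball.inter hD₁open,
      ⟨Metric.mem_ball_self (lt_min hδ0 hε0), hα⟩, Set.inter_subset_right, ?_⟩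
    rintro β ⟨hβball, hβD₁⟩ γ ⟨hγball, hγD₁⟩
    have hβφ : dist (φ β) (φ α) < ε / 4 :=
      hδ _ (Metric.mem_ball.2 (lt_of_lt_of_le (Metric.mem_ball.1 hβball) (min_le_left _ _)))
    have hγφ : dist (φ γ) (φ α) < ε / 4 :=
      hδ _ (Metric.mem_ball.2 (lt_of_lt_of_le (Metric.mem_ball.1 hγball) (min_le_left _ _)))
    have hγε : dist γ α < ε := lt_of_lt_of_le (Metric.mem_ball.1 hγball) (min_le_right _ _)
    set g : EuclideanSpace ℝ (Fin n) → EuclideanSpace ℝ (Fin n) := fun x => f (x, γ) with hgdef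
    set B : Set (EuclideanSpace ℝ (Fin n)) := Metric.closedBall (φ α) ε with hBdef
    have hgood : ∀ x ∈ B, ‖F (x, γ)‖ < c ∧ (x, γ) ∈ Ω ×ˢ D := by
      intro x hx
      apply hrsub
      rw [Metric.mem_ball, Prod.dist_eq]
      refine max_lt ?_ ?_
      · exact lt_of_le_of_lt (Metric.mem_closedBall.1 hx) (by rw [hεdef]; linarith)
      · exact lt_of_lt_of_le hγε (by rw [hεdef]; linarith)
    have hgz : g (φ γ) = φ γ := (hφfix γ hγD₁).symm
    have hlip : ∀ x ∈ B, ∀ y ∈ B, ‖g y - g x‖ ≤ c * ‖y - x‖ := by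
      intro x hx y hy
      exact (convex_closedBall _ _).norm_image_sub_le_of_norm_hasFDerivWithin_le
        (f' := fun x => F (x, γ))
        (fun w hw => (hpart w γ (hgood w hw).2).hasFDerivWithinAt)
        (fun w hw => (hgood w hw).1.le) hx hy
    have hφγB : φ γ ∈ B := Metric.mem_closedBall.2 (by linarith)
    have hx₀z : ‖φ β - φ γ‖ ≤ ε / 2 := by
      have := dist_triangle (φ β) (φ α) (φ γ)
      rw [← dist_eq_norm]
      rw [dist_comm (φ α) (φ γ)] at this
      linarith
    have claim : ∀ k, g^[k] (φ β) ∈ B ∧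
        ‖g^[k] (φ β) - φ γ‖ ≤ c ^ k * ‖φ β - φ γ‖ := by
      intro k
      induction k with
      | zero =>
        constructor
        · simp only [Function.iterate_zero_apply, hBdef, Metric.mem_closedBall]
          linarith
        · simp
      | succ k ih =>
        obtain ⟨hyB, hyb⟩ := ih
        have hstep : ‖g (g^[k] (φ β)) - φ γ‖ ≤ c ^ (k + 1) * ‖φ β - φ γ‖ := by
          calc ‖g (g^[k] (φ β)) - φ γ‖ = ‖g (g^[k] (φ β)) - g (φ γ)‖ := by rw [hgz]
            _ ≤ c * ‖g^[k] (φ β) - φ γ‖ := hlip _ hφγB _ hyB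
            _ ≤ c * (c ^ k * ‖φ β - φ γ‖) := by
                exact mul_le_mul_of_nonneg_left hyb hcnn
            _ = c ^ (k + 1) * ‖φ β - φ γ‖ := by ring
        have hck : c ^ (k + 1) ≤ 1 := pow_le_one₀ hcnn hc1.le
        have hsmall : c ^ (k + 1) * ‖φ β - φ γ‖ ≤ ‖φ β - φ γ‖ := by
          nlinarith [norm_nonneg (φ β - φ γ)]
        have hmem : g (g^[k] (φ β)) ∈ B := by
          rw [hBdef, Metric.mem_closedBall, dist_eq_norm]
          calc ‖g (g^[k] (φ β)) - φ α‖
              ≤ ‖g (g^[k] (φ β)) - φ γ‖ + ‖φ γ - φ α‖ := norm_sub_le_norm_sub_add_norm_sub _ _ _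
            _ ≤ ‖φ β - φ γ‖ + ε / 4 := by
                rw [← dist_eq_norm (φ γ) (φ α)]
                have := le_trans hstep hsmall
                linarith
            _ ≤ ε := by linarith
        rw [Function.iterate_succ_apply']
        exact ⟨hmem, hstep⟩
    rw [tendsto_iff_norm_sub_tendsto_zero]
    apply squeeze_zero (fun k => norm_nonneg _) (fun k => (claim k).2)
    have := (tendsto_pow_atTop_nhds_zero_of_lt_one hcnn hc1).mul_const ‖φ β - φ γ‖
    simpa using this
  -- Build chains using connectedness.
  set S : Set (EuclideanSpace ℝ (Fin m)) :=
    {β | ∃ (p : ℕ) (a : ℕ → EuclideanSpace ℝ (Fin m)),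
      a 0 = αs ∧ a (p + 1) = β ∧ (∀ i ≤ p + 1, a i ∈ D₁) ∧
      (∀ i ≤ p, Tendsto (fun k => (fun x => f (x, a (i + 1)))^[k] (φ (a i)))
        atTop (𝓝 (φ (a (i + 1)))))} with hSdef
  have happend : ∀ β γ, β ∈ S → γ ∈ D₁ →
      Tendsto (fun k => (fun x => f (x, γ))^[k] (φ β)) atTop (𝓝 (φ γ)) → γ ∈ S := by
    rintro β γ ⟨p, a, h0, hlast, hmem, hsucc⟩ hγ hT
    refine ⟨p + 1, fun i => if i ≤ p + 1 then a i else γ, ?_, ?_, ?_, ?_⟩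
    · simp [h0]
    · simp
    · intro i hi
      by_cases h : i ≤ p + 1
      · simpa [h] using hmem i h
      · simpa [h] using hγ
    · intro i hi
      rcases Nat.lt_or_ge i (p + 1) with h | h
      · have h1 : i ≤ p + 1 := h.le
        have h2 : i + 1 ≤ p + 1 := h
        simp only [if_pos h1, if_pos h2]
        exact hsucc i (Nat.lt_succ_iff.1 h)
      · have hip : i = p + 1 := le_antisymm hi h
        subst hip
        simp only [if_pos le_rfl, if_neg (by omega : ¬ p + 1 + 1 ≤ p + 1), hlast]
        exact hT
  have hbase : αs ∈ S := by
    refine ⟨0, fun _ => αs, rfl, rfl, fun i _ => hαs, fun i _ => ?_⟩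
    have hfix : (fun x => f (x, αs)) (φ αs) = φ αs := (hφfix αs hαs).symm
    have : ∀ k, (fun x => f (x, αs))^[k] (φ αs) = φ αs :=
      fun k => Function.iterate_fixed hfix k
    simp only [this]
    exact tendsto_const_nhds
  have hSopen : IsOpen S := by
    rw [isOpen_iff_mem_nhds]
    intro β hβ
    have hβD₁ : β ∈ D₁ := by
      obtain ⟨p, a, h0, hlast, hmem, _⟩ := hβ
      rw [← hlast]; exact hmem _ le_rfl
    obtain ⟨V, hVo, hVβ, hVsub, hVsucc⟩ := key β hβD₁
    exact mem_of_superset (hVo.mem_nhds hVβ)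
      (fun γ hγ => happend β γ hβ (hVsub hγ) (hVsucc β hVβ γ hγ))
  have hSclosed : closure S ∩ D₁ ⊆ S := by
    rintro β ⟨hβcl, hβD₁⟩
    obtain ⟨V, hVo, hVβ, hVsub, hVsucc⟩ := key β hβD₁
    obtain ⟨γ, hγV, hγS⟩ := mem_closure_iff_nhds.1 hβcl V (hVo.mem_nhds hVβ)
    exact happend γ β hγS hβD₁ (hVsucc γ hγV β hVβ)
  have hsub : D₁ ⊆ S :=
    hD₁conn.isPreconnected.subset_of_closure_inter_subset hSopen
      ⟨αs, hαs, hbase⟩ hSclosed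
  exact hsub hαss
end

section
/- For the logistic map g_α : ℝ → ℝ, g_α(x) = α·x·(1 − x), with control parameter α ∈ (1, 3): for every x₀ ∈ ℝ, the iterates g_α^[k](x₀) tend to (α − 1)/α as k → ∞ if and only if x₀ ∈ (0, 1). In other words, the domain of attraction of the asymptotically stable steady state (α − 1)/α of the system x_{k+1} = α·x_k·(1 − x_k) is exactly the open interval (0, 1). -/
/-!
On `(0, 1)` the logistic map `g` is positive, so after one step every orbit lies in
`(0, α/4]`, which `g` maps into itself. Below `p = (α - 1)/α` the map pushes points up, so an
orbit either stays below a level `a ≤ p` and then increases to a positive fixed point, which is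
`p`, or it enters an invariant interval `[a, α/4]` on which `g` is monotone (`α ≤ 2`, with
`a = p`) or antitone (`α ≥ 2`, with `a = g(α/4)`). There `g ∘ g` is monotone, so its orbits are
monotone and converge to a fixed point of `g ∘ g`; for `α < 3` the logistic map has no 2-cycle,
so this fixed point is `p`, and the even and odd iterates of `g` both tend to `p`.
Outside `(0, 1)` the first iterate is already `≤ 0`, and `(-∞, 0]` is invariant.
-/

open Filter Topology Function Set

theorem Filter.Tendsto.of_comp_two_mul_of_comp_two_mul_add_one {X : Type*} {u : ℕ → X}
    {l : Filter X} (heven : Tendsto (fun n => u (2 * n)) atTop l)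
    (hodd : Tendsto (fun n => u (2 * n + 1)) atTop l) : Tendsto u atTop l := by
  intro s hs
  obtain ⟨N₁, h₁⟩ := eventually_atTop.1 (heven hs)
  obtain ⟨N₂, h₂⟩ := eventually_atTop.1 (hodd hs)
  refine eventually_atTop.2 ⟨2 * (N₁ + N₂), fun n hn => ?_⟩
  obtain ⟨m, rfl | rfl⟩ := Nat.even_or_odd' n
  · exact h₁ m (by omega)
  · exact h₂ m (by omega)

theorem Function.tendsto_iterate_iterate_iff {X : Type*} {f : X → X} (k : ℕ) {x : X}
    {l : Filter X} :
    Tendsto (fun n => f^[n] (f^[k] x)) atTop l ↔ Tendsto (fun n => f^[n] x) atTop l := by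
  simp only [← iterate_add_apply]
  exact tendsto_add_atTop_iff_nat (f := fun n => f^[n] x) k

section MonotoneOn

variable {X : Type*} [Preorder X] {f : X → X} {s : Set X} {x : X}

theorem MonotoneOn.monotone_iterate_of_le_map (hf : MonotoneOn f s)
    (hs : MapsTo f s s) (hx : x ∈ s) (hfx : x ≤ f x) : Monotone fun n => f^[n] x :=
  monotone_nat_of_le_succ fun n => by
    induction n with
    | zero => exact hfx
    | succ n ih =>
      rw [iterate_succ_apply', iterate_succ_apply' f (n + 1)]
      exact hf (hs.iterate n hx) (hs.iterate (n + 1) hx) ih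

theorem MonotoneOn.antitone_iterate_of_map_le (hf : MonotoneOn f s)
    (hs : MapsTo f s s) (hx : x ∈ s) (hfx : f x ≤ x) : Antitone fun n => f^[n] x :=
  hf.dual.monotone_iterate_of_le_map hs hx hfx

end MonotoneOn

section IntervalDynamics

variable {X : Type*} [ConditionallyCompleteLinearOrder X] [TopologicalSpace X] [OrderTopology X]
  {f : X → X} {a b x : X}

theorem MonotoneOn.exists_isFixedPt_tendsto_iterate (hf : Continuous f)
    (hmono : MonotoneOn f (Icc a b)) (hmaps : MapsTo f (Icc a b) (Icc a b)) (hx : x ∈ Icc a b) :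
    ∃ y ∈ Icc a b, IsFixedPt f y ∧ Tendsto (fun n => f^[n] x) atTop (𝓝 y) := by
  have horbit : range (fun n => f^[n] x) ⊆ Icc a b := range_subset_iff.2 fun n => hmaps.iterate n hx
  obtain ⟨y, hy⟩ : ∃ y, Tendsto (fun n => f^[n] x) atTop (𝓝 y) := by
    rcases le_total x (f x) with hfx | hfx
    · exact ⟨_, tendsto_atTop_ciSup (hmono.monotone_iterate_of_le_map hmaps hx hfx)
        (bddAbove_Icc.mono horbit)⟩
    · exact ⟨_, tendsto_atTop_ciInf (hmono.antitone_iterate_of_map_le hmaps hx hfx)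
        (bddBelow_Icc.mono horbit)⟩
  exact ⟨y, isClosed_Icc.mem_of_tendsto hy (Eventually.of_forall fun n => horbit ⟨n, rfl⟩),
    isFixedPt_of_tendsto_iterate hy hf.continuousAt, hy⟩

theorem tendsto_iterate_of_monotoneOn_or_antitoneOn {p : X} (hf : Continuous f)
    (hmono : MonotoneOn f (Icc a b) ∨ AntitoneOn f (Icc a b))
    (hmaps : MapsTo f (Icc a b) (Icc a b))
    (hfix : ∀ y ∈ Icc a b, IsFixedPt (f ∘ f) y → y = p) (hx : x ∈ Icc a b) :
    Tendsto (fun n => f^[n] x) atTop (𝓝 p) := by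
  have hmono₂ : MonotoneOn (f ∘ f) (Icc a b) := by
    rcases hmono with h | h
    exacts [h.comp h hmaps, h.comp h hmaps]
  have heven : ∀ z ∈ Icc a b, Tendsto (fun n => f^[2 * n] z) atTop (𝓝 p) := by
    intro z hz
    obtain ⟨y, hy, hfixy, hlim⟩ :=
      hmono₂.exists_isFixedPt_tendsto_iterate (hf.comp hf) (hmaps.comp hmaps) hz
    rw [hfix y hy hfixy] at hlim
    simp only [iterate_mul]
    exact hlim
  refine (heven x hx).of_comp_two_mul_of_comp_two_mul_add_one ?_
  simpa only [iterate_succ_apply] using heven (f x) (hmaps hx)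

end IntervalDynamics

def logistic (α x : ℝ) : ℝ := α * x * (1 - x)

section Logistic

variable {α x : ℝ}

theorem continuous_logistic (α : ℝ) : Continuous (logistic α) := by
  unfold logistic
  fun_prop

theorem logistic_le_quarter (hα : 0 ≤ α) (x : ℝ) : logistic α x ≤ α / 4 := by
  unfold logistic
  nlinarith [mul_nonneg hα (sq_nonneg (x - 1 / 2))]

theorem logistic_pos (hα : 0 < α) (hx : x ∈ Ioo 0 1) : 0 < logistic α x :=
  mul_pos (mul_pos hα hx.1) (sub_pos.2 hx.2)

theorem logistic_nonpos (hα : 0 ≤ α) (hx : x ∉ Ioo 0 1) : logistic α x ≤ 0 := by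
  unfold logistic
  rcases le_or_gt x 0 with h | h
  · exact mul_nonpos_of_nonpos_of_nonneg (mul_nonpos_of_nonneg_of_nonpos hα h) (by linarith)
  · have : 1 ≤ x := not_lt.1 fun h' => hx ⟨h, h'⟩
    exact mul_nonpos_of_nonneg_of_nonpos (mul_nonneg hα h.le) (by linarith)

theorem mapsTo_logistic_Iic_zero (hα : 0 ≤ α) : MapsTo (logistic α) (Iic 0) (Iic 0) :=
  fun _ hx => logistic_nonpos hα fun h => (not_lt.2 hx) h.1

theorem mapsTo_logistic_Ioc (hα : 0 < α) (hα4 : α < 4) :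
    MapsTo (logistic α) (Ioc 0 (α / 4)) (Ioc 0 (α / 4)) :=
  fun _ hx => ⟨logistic_pos hα ⟨hx.1, by linarith [hx.2]⟩, logistic_le_quarter hα.le _⟩

theorem logistic_sub_self (hα : α ≠ 0) (x : ℝ) :
    logistic α x - x = α * x * ((α - 1) / α - x) := by
  unfold logistic
  field_simp
  ring

theorem isFixedPt_logistic (hα : α ≠ 0) : IsFixedPt (logistic α) ((α - 1) / α) :=
  sub_eq_zero.1 <| by rw [logistic_sub_self hα, sub_self, mul_zero]

theorem lt_logistic (hα : 0 < α) (hx : x ∈ Ioo 0 ((α - 1) / α)) : x < logistic α x := by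
  have := logistic_sub_self hα.ne' x
  have : 0 < α * x * ((α - 1) / α - x) := mul_pos (mul_pos hα hx.1) (sub_pos.2 hx.2)
  linarith

theorem eq_of_isFixedPt_logistic (hα : α ≠ 0) (hx : x ≠ 0) (h : IsFixedPt (logistic α) x) :
    x = (α - 1) / α := by
  have := logistic_sub_self hα x
  rw [h.eq, sub_self] at this
  have : (α - 1) / α - x = 0 := by simpa [hα, hx] using this.symm
  linarith

theorem monotoneOn_logistic (hα : 0 ≤ α) : MonotoneOn (logistic α) (Iic (1 / 2)) := by
  intro u hu v hv huv
  have : logistic α v - logistic α u = α * (v - u) * (1 - u - v) := by unfold logistic; ring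
  have : 0 ≤ α * (v - u) * (1 - u - v) :=
    mul_nonneg (mul_nonneg hα (by linarith)) (by linarith [mem_Iic.1 hu, mem_Iic.1 hv])
  linarith

theorem antitoneOn_logistic (hα : 0 ≤ α) : AntitoneOn (logistic α) (Ici (1 / 2)) := by
  intro u hu v hv huv
  have : logistic α u - logistic α v = α * (v - u) * (u + v - 1) := by unfold logistic; ring
  have : 0 ≤ α * (v - u) * (u + v - 1) :=
    mul_nonneg (mul_nonneg hα (by linarith)) (by linarith [mem_Ici.1 hu, mem_Ici.1 hv])
  linarith

theorem eq_of_isFixedPt_logistic_comp (hα : 0 < α) (hα3 : α < 3) (hx : x ≠ 0)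
    (h : IsFixedPt (logistic α ∘ logistic α) x) : x = (α - 1) / α := by
  -- the discriminant of this quadratic in `x` is `α² (α + 1) (α - 3) < 0`
  have hQ : 0 < α ^ 2 * x ^ 2 - (α ^ 2 + α) * x + (α + 1) := by
    nlinarith [sq_nonneg (2 * α ^ 2 * x - α ^ 2 - α),
      mul_pos (mul_pos (pow_pos hα 2) (by linarith : 0 < α + 1)) (by linarith : 0 < 3 - α)]
  have hfactor : x * (α * x - α + 1) * (α ^ 2 * x ^ 2 - (α ^ 2 + α) * x + (α + 1)) = 0 := by
    have : logistic α (logistic α x) = x := h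
    unfold logistic at this
    linear_combination -this
  have hlin : α * x - α + 1 = 0 := by
    simpa [hx, hQ.ne'] using hfactor
  field_simp
  linarith

theorem mapsTo_logistic_Icc_of_le_two (hα : 0 < α) (hα2 : α ≤ 2) :
    MapsTo (logistic α) (Icc ((α - 1) / α) (α / 4)) (Icc ((α - 1) / α) (α / 4)) := by
  intro x hx
  have hp : (α - 1) / α ≤ 1 / 2 := by rw [div_le_iff₀ hα]; linarith
  refine ⟨?_, logistic_le_quarter hα.le x⟩
  calc (α - 1) / α = logistic α ((α - 1) / α) := (isFixedPt_logistic hα.ne').symm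
    _ ≤ logistic α x := monotoneOn_logistic hα.le hp (hx.2.trans (by linarith)) hx.1

theorem half_le_logistic_quarter (hα2 : 2 ≤ α) (hα3 : α ≤ 3) : 1 / 2 ≤ logistic α (α / 4) := by
  unfold logistic
  nlinarith [mul_nonneg (sub_nonneg.2 hα2) (by nlinarith : (0 : ℝ) ≤ 4 + 2 * α - α ^ 2)]

theorem mapsTo_logistic_Icc_of_two_le (hα2 : 2 ≤ α) (hα3 : α ≤ 3) :
    MapsTo (logistic α) (Icc (logistic α (α / 4)) (α / 4)) (Icc (logistic α (α / 4)) (α / 4)) :=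
  fun x hx => ⟨antitoneOn_logistic (by linarith) ((half_le_logistic_quarter hα2 hα3).trans hx.1)
    (show (1 : ℝ) / 2 ≤ α / 4 by linarith) hx.2, logistic_le_quarter (by linarith) x⟩

theorem tendsto_iterate_logistic_of_mapsTo_Icc {a b : ℝ} (hα : 0 < α) (hα3 : α < 3) (ha : 0 < a)
    (hmono : MonotoneOn (logistic α) (Icc a b) ∨ AntitoneOn (logistic α) (Icc a b))
    (hmaps : MapsTo (logistic α) (Icc a b) (Icc a b)) (hx : x ∈ Icc a b) :
    Tendsto (fun n => (logistic α)^[n] x) atTop (𝓝 ((α - 1) / α)) :=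
  tendsto_iterate_of_monotoneOn_or_antitoneOn (continuous_logistic α) hmono hmaps
    (fun _ hy => eq_of_isFixedPt_logistic_comp hα hα3 (ha.trans_le hy.1).ne') hx

theorem exists_logistic_attracting_Icc (hα1 : 1 < α) (hα3 : α < 3) :
    ∃ a, 0 < a ∧ a ≤ (α - 1) / α ∧
      ∀ x ∈ Icc a (α / 4), Tendsto (fun n => (logistic α)^[n] x) atTop (𝓝 ((α - 1) / α)) := by
  have hα : 0 < α := by linarith
  rcases le_total α 2 with hα2 | hα2
  · have hp : 0 < (α - 1) / α := div_pos (by linarith) hα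
    refine ⟨(α - 1) / α, hp, le_rfl, fun x hx => tendsto_iterate_logistic_of_mapsTo_Icc hα hα3 hp
      (Or.inl ((monotoneOn_logistic hα.le).mono fun y hy => ?_))
      (mapsTo_logistic_Icc_of_le_two hα hα2) hx⟩
    exact mem_Iic.2 (hy.2.trans (by linarith))
  · have hhalf := half_le_logistic_quarter hα2 hα3.le
    have hp_half : 1 / 2 ≤ (α - 1) / α := by rw [le_div_iff₀ hα]; linarith
    have hp_quarter : (α - 1) / α ≤ α / 4 := by
      rw [div_le_div_iff₀ hα (by norm_num)]
      nlinarith [sq_nonneg (α - 2)]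
    refine ⟨logistic α (α / 4), by linarith, ?_, fun x hx =>
      tendsto_iterate_logistic_of_mapsTo_Icc hα hα3 (by linarith)
        (Or.inr ((antitoneOn_logistic hα.le).mono fun y hy => hhalf.trans hy.1))
        (mapsTo_logistic_Icc_of_two_le hα2 hα3.le) hx⟩
    calc logistic α (α / 4) ≤ logistic α ((α - 1) / α) :=
          antitoneOn_logistic hα.le hp_half (hp_half.trans hp_quarter) hp_quarter
      _ = (α - 1) / α := isFixedPt_logistic hα.ne'

theorem tendsto_iterate_logistic_of_forall_mem_Ioo (hα1 : 1 < α)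
    (hx : ∀ n, (logistic α)^[n] x ∈ Ioo 0 ((α - 1) / α)) :
    Tendsto (fun n => (logistic α)^[n] x) atTop (𝓝 ((α - 1) / α)) := by
  have hmono : Monotone fun n => (logistic α)^[n] x := monotone_nat_of_le_succ fun n => by
    rw [iterate_succ_apply']
    exact (lt_logistic (by linarith) (hx n)).le
  have hbdd : BddAbove (range fun n => (logistic α)^[n] x) :=
    ⟨(α - 1) / α, forall_mem_range.2 fun n => (hx n).2.le⟩
  have hlim := tendsto_atTop_ciSup hmono hbdd
  have hpos : 0 < ⨆ n, (logistic α)^[n] x := (hx 0).1.trans_le (le_ciSup hbdd 0)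
  rwa [eq_of_isFixedPt_logistic (by linarith) hpos.ne'
    (isFixedPt_of_tendsto_iterate hlim (continuous_logistic α).continuousAt)] at hlim

theorem tendsto_iterate_logistic_of_mem_Ioc (hα1 : 1 < α) (hα3 : α < 3)
    (hx : x ∈ Ioc 0 (α / 4)) :
    Tendsto (fun n => (logistic α)^[n] x) atTop (𝓝 ((α - 1) / α)) := by
  obtain ⟨a, ha, hap, hattr⟩ := exists_logistic_attracting_Icc hα1 hα3
  have horbit : ∀ n, (logistic α)^[n] x ∈ Ioc 0 (α / 4) :=
    fun n => (mapsTo_logistic_Ioc (by linarith) (by linarith)).iterate n hx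
  by_cases hentry : ∃ k, a ≤ (logistic α)^[k] x
  · obtain ⟨k, hk⟩ := hentry
    exact (tendsto_iterate_iterate_iff k).1 (hattr _ ⟨hk, (horbit k).2⟩)
  · push Not at hentry
    exact tendsto_iterate_logistic_of_forall_mem_Ioo hα1
      fun n => ⟨(horbit n).1, (hentry n).trans_le hap⟩

end Logistic

theorem logistic_domain_of_attraction (α : ℝ) (hα : α ∈ Set.Ioo (1 : ℝ) 3) :
    ∀ x₀ : ℝ,
      Tendsto (fun k => (fun x => α * x * (1 - x))^[k] x₀) atTop (𝓝 ((α - 1) / α)) ↔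
      x₀ ∈ Set.Ioo (0 : ℝ) 1 := by
  obtain ⟨hα1, hα3⟩ := hα
  have hα : 0 < α := by linarith
  intro x₀
  change Tendsto (fun k => (logistic α)^[k] x₀) atTop _ ↔ _
  rw [← tendsto_iterate_iterate_iff 1, iterate_one]
  constructor
  · intro hlim
    by_contra hx
    have horbit : ∀ n, (logistic α)^[n] (logistic α x₀) ≤ 0 :=
      fun n => (mapsTo_logistic_Iic_zero hα.le).iterate n (logistic_nonpos hα.le hx)
    have : 0 < (α - 1) / α := div_pos (by linarith) hα
    linarith [le_of_tendsto' hlim horbit]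
  · intro hx
    exact tendsto_iterate_logistic_of_mem_Ioc hα1 hα3
      ⟨logistic_pos hα hx, logistic_le_quarter hα.le x₀⟩
end

section
/- For the planar map F_α : ℝ² → ℝ² given by F_α(x, y) = ( (x − α)·((x − α)² + (y − α)²) + α , (y − α)·((x − α)² + (y − α)²) + α ), with α ∈ ℝ: for every (x₀, y₀) ∈ ℝ², the iterates F_α^[k](x₀, y₀) tend to (α, α) as k → ∞ if and only if (x₀ − α)² + (y₀ − α)² < 1. In other words, the domain of attraction of the asymptotically stable steady state (α, α) of the system (x_{k+1}, y_{k+1}) = F_α(x_k, y_k) is exactly the open ball of radius 1 centered at (α, α). -/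
/-!
Centred at `(α, α)`, the map is `w ↦ ‖w‖² • w` for the Euclidean norm, so the squared distance
`r` to `(α, α)` evolves by `r ↦ r³`: after `k` steps it is `r ^ 3 ^ k`, which tends to `0`
exactly when `r < 1`. Convergence in `ℝ × ℝ` is convergence of this squared distance to `0`.
-/

open Filter Topology

theorem tendsto_pow_pow_atTop_nhds_zero_iff {𝕜 : Type*}
    [Field 𝕜] [LinearOrder 𝕜] [IsStrictOrderedRing 𝕜] [Archimedean 𝕜]
    [TopologicalSpace 𝕜] [OrderTopology 𝕜] {r : 𝕜} {m : ℕ} (hm : 1 < m) :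
    Tendsto (fun k : ℕ ↦ r ^ m ^ k) atTop (𝓝 0) ↔ |r| < 1 := by
  refine ⟨fun h ↦ ?_, fun h ↦
    (tendsto_pow_atTop_nhds_zero_iff.2 h).comp (tendsto_pow_atTop_atTop_of_one_lt hm)⟩
  obtain ⟨k, hk⟩ := ((tendsto_zero_iff_abs_tendsto_zero _).1 h |>.eventually_lt_const
    zero_lt_one).exists
  rw [Function.comp_apply, abs_pow] at hk
  exact (pow_lt_one_iff_of_nonneg (abs_nonneg r) (by positivity)).1 hk

/-- The squared Euclidean distance on `ℝ × ℝ` (whose own metric is the sup metric). -/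
def euclSqDist (p w : ℝ × ℝ) : ℝ := (w.1 - p.1) ^ 2 + (w.2 - p.2) ^ 2

theorem dist_le_sqrt_euclSqDist (p w : ℝ × ℝ) : dist w p ≤ √(euclSqDist p w) := by
  rw [Prod.dist_eq, Real.dist_eq, Real.dist_eq, euclSqDist]
  exact max_le (Real.abs_le_sqrt (by nlinarith)) (Real.abs_le_sqrt (by nlinarith))

theorem tendsto_nhds_iff_euclSqDist_tendsto_zero {ι : Type*} {l : Filter ι} {u : ι → ℝ × ℝ}
    {p : ℝ × ℝ} :
    Tendsto u l (𝓝 p) ↔ Tendsto (fun i ↦ euclSqDist p (u i)) l (𝓝 0) := by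
  refine ⟨fun h ↦ ?_, fun h ↦ ?_⟩
  · have hcont : Continuous (euclSqDist p) := by unfold euclSqDist; fun_prop
    simpa [euclSqDist, Function.comp_def] using (hcont.tendsto p).comp h
  · rw [tendsto_iff_dist_tendsto_zero]
    have hsqrt := (Real.continuous_sqrt.tendsto 0).comp h
    rw [Real.sqrt_zero] at hsqrt
    exact squeeze_zero (fun _ ↦ dist_nonneg) (fun i ↦ dist_le_sqrt_euclSqDist p (u i)) hsqrt

/-- The map `F_α` of the statement. -/
def radialCubic (α : ℝ) (w : ℝ × ℝ) : ℝ × ℝ :=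
  ((w.1 - α) * ((w.1 - α) ^ 2 + (w.2 - α) ^ 2) + α,
   (w.2 - α) * ((w.1 - α) ^ 2 + (w.2 - α) ^ 2) + α)

theorem semiconj_euclSqDist_radialCubic (α : ℝ) :
    Function.Semiconj (euclSqDist (α, α)) (radialCubic α) (· ^ 3) := fun w ↦ by
  simp only [euclSqDist, radialCubic]
  ring

theorem euclSqDist_iterate_radialCubic (α : ℝ) (k : ℕ) (z : ℝ × ℝ) :
    euclSqDist (α, α) ((radialCubic α)^[k] z) = euclSqDist (α, α) z ^ 3 ^ k := by
  rw [(semiconj_euclSqDist_radialCubic α).iterate_right k z, pow_iterate]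

theorem planar_map_domain_of_attraction (α : ℝ) :
    ∀ z : ℝ × ℝ,
      Tendsto (fun k => (fun w : ℝ × ℝ =>
          ((w.1 - α) * ((w.1 - α) ^ 2 + (w.2 - α) ^ 2) + α,
           (w.2 - α) * ((w.1 - α) ^ 2 + (w.2 - α) ^ 2) + α))^[k] z)
        atTop (𝓝 (α, α)) ↔
      (z.1 - α) ^ 2 + (z.2 - α) ^ 2 < 1 := by
  intro z
  change Tendsto (fun k ↦ (radialCubic α)^[k] z) atTop (𝓝 (α, α)) ↔ euclSqDist (α, α) z < 1
  simp only [tendsto_nhds_iff_euclSqDist_tendsto_zero, euclSqDist_iterate_radialCubic,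
    tendsto_pow_pow_atTop_nhds_zero_iff (by norm_num : 1 < 3)]
  rw [abs_of_nonneg (by unfold euclSqDist; positivity)]
end
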